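/- arXiv:1805.04312 — 5 statements merged into one kernel-verified Lean document; each statement's English description precedes it below -/
import Mathlib

section
/- Let q ≥ 2 be a real number, N a natural number, v ∈ ℝ², and b₁, …, b_N ∈ ℝ². Set X_j = ⟨v, b_j⟩ and Y_j = ⟨I v, b_j⟩. Then (q − 2) · |Σ_{j=1}^N X_j Y_j| ≤ c_q · ( (q − 2) Σ_{j=1}^N X_j² + ‖v‖² Σ_{j=1}^N ‖b_j‖² ). (This is the pointwise form of the key inequality |(∂φ(U), I∂ψ(U))| ≤ c_q (∂φ(U), ∂ψ(U)).) -/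
/-! For `v ≠ 0` the vectors `v / ‖v‖` and `I v / ‖v‖` form an orthonormal basis of ℝ², so
`X_j² + Y_j² = ‖v‖² ‖b_j‖²`. With `s = √(q - 1)`, AM-GM gives `2 s |X Y| ≤ (q - 1) X² + Y²`;
multiplying by `(q - 2) / (2 s)` and summing over `j` yields the inequality. -/

open scoped RealInnerProductSpace

/-- The rotation by π/2 on ℝ², the real 2×2 realization of the imaginary unit. -/
noncomputable def rotI (v : EuclideanSpace ℝ (Fin 2)) : EuclideanSpace ℝ (Fin 2) :=
  (WithLp.equiv 2 (Fin 2 → ℝ)).symm ![-(v 1), v 0]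

theorem inner_sq_add_inner_rotI_sq (v b : EuclideanSpace ℝ (Fin 2)) :
    ⟪v, b⟫ ^ 2 + ⟪rotI v, b⟫ ^ 2 = ‖v‖ ^ 2 * ‖b‖ ^ 2 := by
  rw [← real_inner_self_eq_norm_sq, ← real_inner_self_eq_norm_sq]
  simp only [rotI, PiLp.inner_apply, RCLike.inner_apply, conj_trivial, Fin.sum_univ_two,
    WithLp.equiv_symm_apply, Matrix.cons_val_zero, Matrix.cons_val_one]
  ring

theorem two_mul_sqrt_mul_abs_mul_le {q : ℝ} (hq : 1 ≤ q) (X Y : ℝ) :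
    2 * √(q - 1) * |X * Y| ≤ (q - 1) * X ^ 2 + Y ^ 2 := by
  have h := two_mul_le_add_sq (√(q - 1) * |X|) |Y|
  rwa [mul_pow, Real.sq_sqrt (by linarith), sq_abs, sq_abs, mul_assoc, mul_assoc, ← abs_mul,
    ← mul_assoc] at h

theorem sub_two_mul_abs_mul_le {q : ℝ} (hq : 2 ≤ q) (X Y : ℝ) :
    (q - 2) * |X * Y| ≤ (q - 2) / (2 * √(q - 1)) * ((q - 1) * X ^ 2 + Y ^ 2) := by
  have hs : 0 < √(q - 1) := Real.sqrt_pos.mpr (by linarith)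
  calc (q - 2) * |X * Y| = (q - 2) / (2 * √(q - 1)) * (2 * √(q - 1) * |X * Y|) := by
        field_simp
    _ ≤ _ := mul_le_mul_of_nonneg_left (two_mul_sqrt_mul_abs_mul_le (by linarith) X Y)
        (by positivity)

theorem stmt3 (q : ℝ) (hq : 2 ≤ q) (N : ℕ) (v : EuclideanSpace ℝ (Fin 2))
    (b : Fin N → EuclideanSpace ℝ (Fin 2)) :
    (q - 2) * |∑ j, ⟪v, b j⟫ * ⟪rotI v, b j⟫| ≤
      (q - 2) / (2 * Real.sqrt (q - 1)) *
        ((q - 2) * (∑ j, ⟪v, b j⟫ ^ 2) + ‖v‖ ^ 2 * ∑ j, ‖b j‖ ^ 2) := by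
  calc (q - 2) * |∑ j, ⟪v, b j⟫ * ⟪rotI v, b j⟫|
      ≤ ∑ j, (q - 2) * |⟪v, b j⟫ * ⟪rotI v, b j⟫| := by
        rw [← Finset.mul_sum]
        exact mul_le_mul_of_nonneg_left (Finset.abs_sum_le_sum_abs _ _) (by linarith)
    _ ≤ ∑ j, (q - 2) / (2 * √(q - 1)) * ((q - 1) * ⟪v, b j⟫ ^ 2 + ⟪rotI v, b j⟫ ^ 2) :=
        Finset.sum_le_sum fun j _ => sub_two_mul_abs_mul_le hq _ _
    _ = (q - 2) / (2 * √(q - 1)) * ((q - 2) * (∑ j, ⟪v, b j⟫ ^ 2) + ‖v‖ ^ 2 * ∑ j, ‖b j‖ ^ 2) := by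
        rw [Finset.mul_sum, Finset.mul_sum, ← Finset.sum_add_distrib, Finset.mul_sum]
        refine Finset.sum_congr rfl fun j _ => ?_
        rw [← inner_sq_add_inner_rotI_sq]
        ring
end

section
/- Let q ≥ 2 be a real number, μ ≥ 0, and t ≥ 0. Then t^q/q + (μ/2) · t^{2(q−1)} ≤ (1/q) · ((1 + μ t^{q−2}) t)^q. (This is the pointwise form of the inequality ψ_μ(U) = ψ(V) + (μ/2)|∂ψ(V)|² ≤ ψ(U) for the Moreau–Yosida regularization of ψ(U) = (1/q)∫|U|^q, where t = |V| and (1+μt^{q−2})t = |U|.) -/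
/-! Writing `a = μ t ^ (q - 2)`, Bernoulli's inequality `(1 + a) ^ q ≥ 1 + q a` gives
`((1 + a) t) ^ q ≥ t ^ q + q μ t ^ (2 (q - 1))`, which beats the claim by a factor `2` in the
`μ`-term. -/

open Real

theorem Real.rpow_add_mul_mul_rpow_le_one_add_mul_rpow {q a t : ℝ} (hq : 1 ≤ q) (ha : -1 ≤ a)
    (ht : 0 ≤ t) : t ^ q + q * a * t ^ q ≤ ((1 + a) * t) ^ q :=
  calc t ^ q + q * a * t ^ q = (1 + q * a) * t ^ q := by ring
    _ ≤ (1 + a) ^ q * t ^ q :=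
      mul_le_mul_of_nonneg_right (one_add_mul_self_le_rpow_one_add ha hq) (rpow_nonneg ht q)
    _ = ((1 + a) * t) ^ q := (mul_rpow (by linarith) ht).symm

theorem stmt7 (q : ℝ) (hq : 2 ≤ q) (μ : ℝ) (hμ : 0 ≤ μ) (t : ℝ) (ht : 0 ≤ t) :
    t ^ q / q + μ / 2 * t ^ (2 * (q - 1)) ≤ 1 / q * ((1 + μ * t ^ (q - 2)) * t) ^ q := by
  have hq₀ : 0 < q := by linarith
  have hexp : t ^ (q - 2) * t ^ q = t ^ (2 * (q - 1)) := by
    rw [← rpow_add' ht (by linarith)]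
    ring_nf
  have ha : 0 ≤ μ * t ^ (q - 2) := mul_nonneg hμ (rpow_nonneg ht _)
  have hbern := rpow_add_mul_mul_rpow_le_one_add_mul_rpow (q := q) (by linarith)
    (show -1 ≤ μ * t ^ (q - 2) by linarith) ht
  rw [mul_assoc q, mul_assoc μ, hexp] at hbern
  have hμt : 0 ≤ μ * t ^ (2 * (q - 1)) := mul_nonneg hμ (rpow_nonneg ht _)
  calc t ^ q / q + μ / 2 * t ^ (2 * (q - 1))
      ≤ (t ^ q + q * (μ * t ^ (2 * (q - 1)))) / q := by
        rw [add_div, mul_div_cancel_left₀ _ hq₀.ne']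
        linarith
    _ ≤ 1 / q * ((1 + μ * t ^ (q - 2)) * t) ^ q := by
        rw [one_div_mul_eq_div]
        gcongr
end

section
/- Let λ > 0, κ > 0, α, β ∈ ℝ, and r > 0. Assume that the pair (α/λ, β/κ) belongs to the CGL region CGL(r), i.e. either αβ ≥ 0, or (|α/λ| · |β/κ| − 1)/(|α/λ| + |β/κ|) < r. Then there exists δ > 0 such that r κ δ² + 2 δ √((1 + r²) λ κ) + r λ > |δ² β − α|. (This is the claim J(δ, 0) > 0 for some δ > 0, which is the key step in the a priori estimate of Lemma 5.7.) -/
/-!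
If `αβ > 0`, then `δ = √(α/β)` makes the left-hand side vanish. Otherwise, writing
`S = √((1 + r²)λκ)`, the triangle inequality reduces the claim to finding `δ > 0` with
`(|β| - rκ) δ² - 2 S δ + (|α| - rλ) < 0`; such a `δ` exists as soon as the product of the
outer coefficients is below `S²`, and after expanding this is the CGL condition
`|α||β| < λκ + r (κ|α| + λ|β|)`.
-/

open Real

theorem exists_pos_quadratic_neg {p q c : ℝ} (hq : 0 < q) (h : p * c < q ^ 2) :
    ∃ x : ℝ, 0 < x ∧ p * x ^ 2 - 2 * q * x + c < 0 := by
  rcases le_or_gt p 0 with hp | hp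
  · refine ⟨(|c| + 1) / q, by positivity, ?_⟩
    have hx : 2 * q * ((|c| + 1) / q) = 2 * (|c| + 1) := by field_simp
    rw [hx]
    have hpx : p * ((|c| + 1) / q) ^ 2 ≤ 0 := mul_nonpos_of_nonpos_of_nonneg hp (sq_nonneg _)
    linarith [le_abs_self c, abs_nonneg c]
  · refine ⟨q / p, by positivity, ?_⟩
    have hx : p * (q / p) ^ 2 - 2 * q * (q / p) + c = (p * c - q ^ 2) / p := by
      field_simp; ring
    rw [hx]
    exact div_neg_of_neg_of_pos (by linarith) hp

theorem mul_lt_one_add_mul_add_of_div_lt {a b r : ℝ} (ha : 0 ≤ a) (hb : 0 ≤ b)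
    (h : (a * b - 1) / (a + b) < r) : a * b < 1 + r * (a + b) := by
  rcases (add_nonneg ha hb).eq_or_lt with hab | hab
  · obtain ⟨rfl, rfl⟩ : a = 0 ∧ b = 0 := ⟨by linarith, by linarith⟩
    norm_num
  · rw [div_lt_iff₀ hab] at h
    linarith

theorem abs_mul_abs_lt_of_cgl {lam κ α β r : ℝ} (hlam : 0 < lam) (hκ : 0 < κ)
    (h : (|α / lam| * |β / κ| - 1) / (|α / lam| + |β / κ|) < r) :
    |α| * |β| < lam * κ + r * (κ * |α| + lam * |β|) := by
  have h' := mul_lt_one_add_mul_add_of_div_lt (abs_nonneg _) (abs_nonneg _) h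
  rw [abs_div, abs_div, abs_of_pos hlam, abs_of_pos hκ] at h'
  have hlk : 0 < lam * κ := mul_pos hlam hκ
  calc |α| * |β| = lam * κ * (|α| / lam * (|β| / κ)) := by field_simp
    _ < lam * κ * (1 + r * (|α| / lam + |β| / κ)) := mul_lt_mul_of_pos_left h' hlk
    _ = lam * κ + r * (κ * |α| + lam * |β|) := by field_simp

theorem exists_pos_sq_mul_eq {α β : ℝ} (h : 0 < α * β) : ∃ δ : ℝ, 0 < δ ∧ δ ^ 2 * β = α := by
  have hβ : β ≠ 0 := by rintro rfl; simp at h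
  have hq : 0 < α / β := by
    rw [show α / β = α * β / β ^ 2 by field_simp]
    positivity
  refine ⟨√(α / β), sqrt_pos.mpr hq, ?_⟩
  rw [sq_sqrt hq.le]
  field_simp

theorem exists_pos_abs_sub_lt_of_abs_mul_abs_lt {lam κ α β r : ℝ} (hlam : 0 < lam) (hκ : 0 < κ)
    (h : |α| * |β| < lam * κ + r * (κ * |α| + lam * |β|)) :
    ∃ δ : ℝ, 0 < δ ∧
      |δ ^ 2 * β - α| < r * κ * δ ^ 2 + 2 * δ * √((1 + r ^ 2) * lam * κ) + r * lam := by
  set S := √((1 + r ^ 2) * lam * κ)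
  have hS : 0 < S := sqrt_pos.mpr (by positivity)
  have hS2 : S ^ 2 = (1 + r ^ 2) * lam * κ := sq_sqrt (by positivity)
  obtain ⟨δ, hδ, hneg⟩ :=
    exists_pos_quadratic_neg (p := |β| - r * κ) (c := |α| - r * lam) hS (by nlinarith)
  refine ⟨δ, hδ, ?_⟩
  calc |δ ^ 2 * β - α| ≤ |δ ^ 2 * β| + |α| := abs_sub _ _
    _ = |β| * δ ^ 2 + |α| := by rw [abs_mul, abs_pow, sq_abs, mul_comm]
    _ < r * κ * δ ^ 2 + 2 * δ * S + r * lam := by nlinarith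

theorem stmt8 (lam κ α β r : ℝ) (hlam : 0 < lam) (hκ : 0 < κ) (hr : 0 < r)
    (hCGL : 0 ≤ α * β ∨ (|α / lam| * |β / κ| - 1) / (|α / lam| + |β / κ|) < r) :
    ∃ δ : ℝ, 0 < δ ∧
      |δ ^ 2 * β - α| < r * κ * δ ^ 2 + 2 * δ * Real.sqrt ((1 + r ^ 2) * lam * κ) + r * lam := by
  rcases lt_or_ge 0 (α * β) with hpos | hnonpos
  · obtain ⟨δ, hδ, hroot⟩ := exists_pos_sq_mul_eq hpos
    refine ⟨δ, hδ, ?_⟩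
    rw [hroot, sub_self, abs_zero]
    positivity
  · apply exists_pos_abs_sub_lt_of_abs_mul_abs_lt hlam hκ
    rcases hCGL with hzero | hcgl
    · have : |α| * |β| = 0 := by rw [← abs_mul, le_antisymm hnonpos hzero, abs_zero]
      rw [this]
      positivity
    · exact abs_mul_abs_lt_of_cgl hlam hκ hcgl
end

section
/- Let N be a natural number and p ≥ 2 a real number. For all r, x ∈ ℝᴺ with ‖r‖ = 1 and ‖x‖ ≤ 1, one has ‖r + x‖^p + ‖r − x‖^p ≤ (1 + ‖x‖)^p + (1 − ‖x‖)^p, where ‖·‖ is the Euclidean norm on ℝᴺ. (Intermediate step in the proof of the local Clarkson inequality.) -/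
/-!
By the parallelogram law, `‖r + x‖² + ‖r - x‖² = (‖r‖ + ‖x‖)² + (‖r‖ - ‖x‖)²`, and both squares on
the left lie between the two on the right. So the pair `(‖r + x‖², ‖r - x‖²)` is majorized by
`((‖r‖ + ‖x‖)², (‖r‖ - ‖x‖)²)`, and the claim follows from convexity of `s ↦ s ^ (p / 2)` for `p ≥ 2`.
-/

open Set

theorem ConvexOn.add_le_add_of_add_eq {s : Set ℝ} {f : ℝ → ℝ} (hf : ConvexOn ℝ s f)
    {u v U V : ℝ} (hU : U ∈ s) (hV : V ∈ s) (hVu : V ≤ u) (huU : u ≤ U) (hsum : u + v = U + V) :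
    f u + f v ≤ f U + f V := by
  have hu : u ∈ segment ℝ V U := by rw [segment_eq_Icc (hVu.trans huU)]; exact ⟨hVu, huU⟩
  obtain ⟨a, b, ha, hb, hab, rfl⟩ := hu
  have hv : v = b • V + a • U := by
    simp only [smul_eq_mul] at hsum ⊢
    linear_combination hsum - (U + V) * hab
  have hfu := hf.2 hV hU ha hb hab
  have hfv := hf.2 hV hU hb ha (by linarith)
  rw [hv]
  simp only [smul_eq_mul] at hfu hfv ⊢
  linear_combination hfu + hfv + (f U + f V) * hab

lemma sq_rpow_div_two {c : ℝ} (p : ℝ) : (c ^ 2) ^ (p / 2) = |c| ^ p := by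
  rw [Real.rpow_div_two_eq_sqrt p (sq_nonneg c), Real.sqrt_sq_eq_abs]

theorem norm_add_rpow_add_norm_sub_rpow_le {E : Type*} [NormedAddCommGroup E]
    [InnerProductSpace ℝ E] {p : ℝ} (hp : 2 ≤ p) (r x : E) :
    ‖r + x‖ ^ p + ‖r - x‖ ^ p ≤ (‖r‖ + ‖x‖) ^ p + |‖r‖ - ‖x‖| ^ p := by
  have hconv : ConvexOn ℝ (Ici 0) fun s : ℝ ↦ s ^ (p / 2) := convexOn_rpow (by linarith)
  have hsum : ‖r + x‖ ^ 2 + ‖r - x‖ ^ 2 = (‖r‖ + ‖x‖) ^ 2 + (‖r‖ - ‖x‖) ^ 2 := by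
    linear_combination parallelogram_law_with_norm ℝ r x
  have hle : ‖r + x‖ ^ 2 ≤ (‖r‖ + ‖x‖) ^ 2 :=
    pow_le_pow_left₀ (norm_nonneg _) (norm_add_le r x) 2
  have hle' : ‖r - x‖ ^ 2 ≤ (‖r‖ + ‖x‖) ^ 2 :=
    pow_le_pow_left₀ (norm_nonneg _) (norm_sub_le r x) 2
  have key := hconv.add_le_add_of_add_eq (mem_Ici.2 (sq_nonneg _)) (mem_Ici.2 (sq_nonneg _))
    (by linarith) hle hsum
  simp only [sq_rpow_div_two, abs_norm] at key
  rwa [abs_of_nonneg (by positivity : 0 ≤ ‖r‖ + ‖x‖)] at key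

theorem stmt12 (N : ℕ) (p : ℝ) (hp : 2 ≤ p) (r x : EuclideanSpace ℝ (Fin N))
    (hr : ‖r‖ = 1) (hx : ‖x‖ ≤ 1) :
    ‖r + x‖ ^ p + ‖r - x‖ ^ p ≤ (1 + ‖x‖) ^ p + (1 - ‖x‖) ^ p := by
  have h := norm_add_rpow_add_norm_sub_rpow_le hp r x
  rwa [hr, abs_of_nonneg (sub_nonneg.2 hx)] at h
end

section
/- Let (Ω, μ) be a σ-finite measure space, 0 < q ≤ p < ∞ real numbers, and f₁, f₂ : Ω → ℝ measurable functions such that the right-hand side below is finite. Then ( ‖f₁‖_{L^q}^p + ‖f₂‖_{L^q}^p )^{1/p} ≤ ( ∫_Ω ( |f₁(y)|^p + |f₂(y)|^p )^{q/p} dμ(y) )^{1/q}. (Two-function instance of the extended Minkowski integral inequality, used in the proof of Clarkson's second inequality.) -/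
/-!
With `r = p / q ≥ 1`, the inequality is the triangle inequality `‖∫ F‖ ≤ ∫ ‖F‖` for the
`ℓ^r(ℝ²)`-valued function `F = (|f₁| ^ q, |f₂| ^ q)`, raised to the power `1 / q`.
-/

open MeasureTheory

section MinkowskiPair

variable {r : ℝ}

lemma WithLp.prod_norm_toLp_ofReal (hr : 0 < r) (a b : ℝ) :
    ‖WithLp.toLp (ENNReal.ofReal r) (a, b)‖ = (|a| ^ r + |b| ^ r) ^ (1 / r) := by
  rw [WithLp.prod_norm_eq_add (by rwa [ENNReal.toReal_ofReal hr.le]),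
    ENNReal.toReal_ofReal hr.le]
  rfl

lemma abs_le_rpow_abs_add_rpow_abs_rpow_one_div (hr : 1 ≤ r) (a b : ℝ) :
    |a| ≤ (|a| ^ r + |b| ^ r) ^ (1 / r) ∧ |b| ≤ (|a| ^ r + |b| ^ r) ^ (1 / r) := by
  have : Fact (1 ≤ ENNReal.ofReal r) := ⟨by simpa using ENNReal.one_le_ofReal.2 hr⟩
  rw [← WithLp.prod_norm_toLp_ofReal (zero_lt_one.trans_le hr)]
  exact ⟨WithLp.norm_fst_le _ (WithLp.toLp _ (a, b)),
    WithLp.norm_snd_le _ (WithLp.toLp _ (a, b))⟩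

theorem rpow_abs_integral_add_rpow_abs_integral_le {Ω : Type*} [MeasurableSpace Ω]
    {μ : Measure Ω} (hr : 1 ≤ r) {g₁ g₂ : Ω → ℝ} (h₁ : Integrable g₁ μ) (h₂ : Integrable g₂ μ) :
    (|∫ y, g₁ y ∂μ| ^ r + |∫ y, g₂ y ∂μ| ^ r) ^ (1 / r) ≤
      ∫ y, (|g₁ y| ^ r + |g₂ y| ^ r) ^ (1 / r) ∂μ := by
  have : Fact (1 ≤ ENNReal.ofReal r) := ⟨by simpa using ENNReal.one_le_ofReal.2 hr⟩
  have hr₀ : 0 < r := zero_lt_one.trans_le hr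
  let L := (WithLp.prodContinuousLinearEquiv (ENNReal.ofReal r) ℝ ℝ ℝ).symm
  have hint : ∫ y, L (g₁ y, g₂ y) ∂μ = L (∫ y, g₁ y ∂μ, ∫ y, g₂ y ∂μ) := by
    rw [L.integral_comp_comm (fun y => (g₁ y, g₂ y)), integral_pair h₁ h₂]
  have h := norm_integral_le_integral_norm (fun y => L (g₁ y, g₂ y)) (μ := μ)
  rw [hint] at h
  simpa only [L, WithLp.prodContinuousLinearEquiv_symm_apply,
    WithLp.prod_norm_toLp_ofReal hr₀] using h

end MinkowskiPair

lemma abs_abs_rpow_rpow_div {p q : ℝ} (hq : q ≠ 0) (a : ℝ) : |(|a| ^ q)| ^ (p / q) = |a| ^ p := by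
  rw [abs_of_nonneg (by positivity), ← Real.rpow_mul (abs_nonneg a), mul_div_cancel₀ p hq]

theorem stmt16_general {Ω : Type*} [MeasurableSpace Ω] (μ : Measure Ω)
    (p q : ℝ) (hq : 0 < q) (hqp : q ≤ p)
    (f₁ f₂ : Ω → ℝ) (hm₁ : Measurable f₁) (hm₂ : Measurable f₂)
    (hrhs : Integrable (fun y => (|f₁ y| ^ p + |f₂ y| ^ p) ^ (q / p)) μ) :
    ((∫ y, |f₁ y| ^ q ∂μ) ^ (p / q) + (∫ y, |f₂ y| ^ q ∂μ) ^ (p / q)) ^ (1 / p) ≤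
      (∫ y, (|f₁ y| ^ p + |f₂ y| ^ p) ^ (q / p) ∂μ) ^ (1 / q) := by
  have hr : 1 ≤ p / q := (one_le_div hq).2 hqp
  have hpow : ∀ y, (|(|f₁ y| ^ q)| ^ (p / q) + |(|f₂ y| ^ q)| ^ (p / q)) ^ (1 / (p / q)) =
      (|f₁ y| ^ p + |f₂ y| ^ p) ^ (q / p) := fun y => by
    rw [abs_abs_rpow_rpow_div hq.ne', abs_abs_rpow_rpow_div hq.ne', one_div_div]
  have hbound := fun y =>
    hpow y ▸ abs_le_rpow_abs_add_rpow_abs_rpow_one_div hr (|f₁ y| ^ q) (|f₂ y| ^ q)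
  have hint₁ : Integrable (fun y => |f₁ y| ^ q) μ :=
    hrhs.mono' (hm₁.abs.pow_const q).aestronglyMeasurable (.of_forall fun y => (hbound y).1)
  have hint₂ : Integrable (fun y => |f₂ y| ^ q) μ :=
    hrhs.mono' (hm₂.abs.pow_const q).aestronglyMeasurable (.of_forall fun y => (hbound y).2)
  have hminkowski := rpow_abs_integral_add_rpow_abs_integral_le hr hint₁ hint₂
  simp only [hpow] at hminkowski
  have hI₁ : 0 ≤ ∫ y, |f₁ y| ^ q ∂μ := integral_nonneg fun y => by positivity
  have hI₂ : 0 ≤ ∫ y, |f₂ y| ^ q ∂μ := integral_nonneg fun y => by positivity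
  rw [abs_of_nonneg hI₁, abs_of_nonneg hI₂] at hminkowski
  calc ((∫ y, |f₁ y| ^ q ∂μ) ^ (p / q) + (∫ y, |f₂ y| ^ q ∂μ) ^ (p / q)) ^ (1 / p)
      = (((∫ y, |f₁ y| ^ q ∂μ) ^ (p / q) + (∫ y, |f₂ y| ^ q ∂μ) ^ (p / q)) ^ (1 / (p / q))) ^
          (1 / q) := by
        rw [← Real.rpow_mul (by positivity)]
        field_simp
    _ ≤ (∫ y, (|f₁ y| ^ p + |f₂ y| ^ p) ^ (q / p) ∂μ) ^ (1 / q) := by gcongr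

theorem stmt16 {Ω : Type*} [MeasurableSpace Ω] (μ : Measure Ω) [SigmaFinite μ]
    (p q : ℝ) (hq : 0 < q) (hqp : q ≤ p)
    (f₁ f₂ : Ω → ℝ) (hm₁ : Measurable f₁) (hm₂ : Measurable f₂)
    (hrhs : Integrable (fun y => (|f₁ y| ^ p + |f₂ y| ^ p) ^ (q / p)) μ) :
    ((∫ y, |f₁ y| ^ q ∂μ) ^ (p / q) + (∫ y, |f₂ y| ^ q ∂μ) ^ (p / q)) ^ (1 / p) ≤
      (∫ y, (|f₁ y| ^ p + |f₂ y| ^ p) ^ (q / p) ∂μ) ^ (1 / q) :=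
  stmt16_general μ p q hq hqp f₁ f₂ hm₁ hm₂ hrhs
end
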